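/- The collection of sets A forming a Kalimullin pair with a fixed set B is closed downward under enumeration reducibility: if (A₀, B) is a Kalimullin pair and A₁ ≤_e A₀, then (A₁, B) is a Kalimullin pair. -/

import Mathlib

/-- Canonical computable coding of finite subsets of ℕ. -/
def Kfin (x : ℕ) : Finset ℕ := Denumerable.ofNat (Finset ℕ) x

/-- `s` is a selector function for the set `S`. -/
def Selector (S : Set ℕ) (s : ℕ → ℕ → ℕ) : Prop :=
  (∀ x y, s x y = x ∨ s x y = y) ∧ ∀ x y, (x ∈ S ∨ y ∈ S) → s x y ∈ S

/-- A set is semicomputable iff it has a total computable selector function. -/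
def SemiComputable (S : Set ℕ) : Prop :=
  ∃ s : ℕ → ℕ → ℕ, Computable₂ s ∧ Selector S s

/-- Computable join of two sets of naturals. -/
def join (A B : Set ℕ) : Set ℕ :=
  {n | ∃ a ∈ A, n = 2 * a} ∪ {n | ∃ b ∈ B, n = 2 * b + 1}

/-- Enumeration reducibility on subsets of ℕ. -/
def EnumReducible (A B : Set ℕ) : Prop :=
  ∃ Φ : Set (ℕ × ℕ), REPred (· ∈ Φ) ∧
    ∀ x, x ∈ A ↔ ∃ d, (x, d) ∈ Φ ∧ (↑(Kfin d) : Set ℕ) ⊆ B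

/-- A Kalimullin pair with a c.e. witness. -/
def KPair (A B : Set ℕ) : Prop :=
  ∃ W : Set (ℕ × ℕ), REPred (· ∈ W) ∧
    (∀ a ∈ A, ∀ b ∈ B, (a, b) ∈ W) ∧ (∀ a ∉ A, ∀ b ∉ B, (a, b) ∉ W)

/-- The binary (strict) ordering on subsets of ℕ. -/
def bLt (A B : Set ℕ) : Prop :=
  ∃ β : ℕ, β ∉ A ∧ β ∈ B ∧ ∀ x < β, (x ∈ A ↔ x ∈ B)

/-- The binary (non-strict) ordering on subsets of ℕ. -/
def bLe (A B : Set ℕ) : Prop := bLt A B ∨ A = B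

/-!
Write `A₁ = Φ(A₀)` for a c.e. enumeration operator `Φ`, and let `W` witness that `(A₀, B)` is a
Kalimullin pair, with columns `W_b = {x | (x, b) ∈ W}`. Then `{(a, b) | a ∈ Φ(W_b)}` witnesses that
`(A₁, B)` is one: for `b ∈ B` we have `A₀ ⊆ W_b`, for `b ∉ B` we have `W_b ⊆ A₀`, and `Φ` is
monotone. It is c.e. because c.e. relations are closed under `∃`, `∧` and universal quantification
over canonically coded finite sets; the latter holds since finitely many witnesses have a common
bound.
-/

theorem Set.Finite.forall_mem_exists_iff_exists_bound {ι : Type*} {I : Set ι} (hI : I.Finite)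
    {q : ι → ℕ → Prop} : (∀ i ∈ I, ∃ k, q i k) ↔ ∃ s, ∀ i ∈ I, ∃ k < s, q i k := by
  constructor
  · intro h
    refine Filter.Eventually.exists (f := Filter.atTop) (hI.eventually_all.2 fun i hi => ?_)
    obtain ⟨k, hk⟩ := h i hi
    exact (Filter.eventually_gt_atTop k).mono fun s hs => ⟨k, hs, hk⟩
  · rintro ⟨s, hs⟩ i hi
    obtain ⟨k, -, hk⟩ := hs i hi
    exact ⟨k, hk⟩

namespace REPred

variable {α β : Type*} [Primcodable α] [Primcodable β]

open Nat.Partrec.Code in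
theorem exists_primrecRel {p : α → Prop} (hp : REPred p) :
    ∃ R : α → ℕ → Prop, PrimrecRel R ∧ ∀ a, p a ↔ ∃ k, R a k := by
  obtain ⟨c, hc⟩ := exists_code.1 hp
  refine ⟨fun a k => (evaln k c (Encodable.encode a)).isSome = true,
    Primrec.eq.comp (Primrec.option_isSome.comp (primrec_evaln.comp
      ((Primrec.snd.pair (Primrec.const c)).pair (Primrec.encode.comp Primrec.fst))))
      (Primrec.const true), fun a => ?_⟩
  have hdom : p a ↔ (eval c (Encodable.encode a)).Dom := by
    simp [hc, Part.assert]
  simp only [hdom, Option.isSome_iff_exists, Part.dom_iff_mem, evaln_complete]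
  exact exists_comm

theorem of_exists_primrecRel {R : α → ℕ → Prop} (hR : PrimrecRel R) {p : α → Prop}
    (H : ∀ a, p a ↔ ∃ k, R a k) : REPred p := by
  classical
  have hfind : Partrec fun a => Nat.rfind fun k => Part.some (decide (R a k)) :=
    Partrec.rfind hR.decide.to_comp.partrec
  refine hfind.dom_re.of_eq fun a => ?_
  refine Nat.rfind_dom.trans ?_
  simp [H]

theorem comp {p : β → Prop} (hp : REPred p) {f : α → β} (hf : Computable f) :
    REPred fun a => p (f a) :=
  Partrec.comp hp hf

protected theorem and {p q : α → Prop} (hp : REPred p) (hq : REPred q) :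
    REPred fun a => p a ∧ q a := by
  obtain ⟨R, hR, hpR⟩ := hp.exists_primrecRel
  obtain ⟨S, hS, hqS⟩ := hq.exists_primrecRel
  refine of_exists_primrecRel (R := fun a k => R a k.unpair.1 ∧ S a k.unpair.2)
    ((hR.comp Primrec.fst (Primrec.fst.comp (Primrec.unpair.comp Primrec.snd))).and
      (hS.comp Primrec.fst (Primrec.snd.comp (Primrec.unpair.comp Primrec.snd)))) fun a => ?_
  rw [hpR, hqS]
  constructor
  · rintro ⟨⟨m, hm⟩, n, hn⟩
    exact ⟨Nat.pair m n, by simpa using hm, by simpa using hn⟩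
  · rintro ⟨k, hm, hn⟩
    exact ⟨⟨_, hm⟩, _, hn⟩

theorem exists_nat {p : α → ℕ → Prop} (hp : REPred fun x : α × ℕ => p x.1 x.2) :
    REPred fun a => ∃ n, p a n := by
  obtain ⟨R, hR, hpR⟩ := hp.exists_primrecRel
  refine of_exists_primrecRel (R := fun a k => R (a, k.unpair.1) k.unpair.2)
    (hR.comp (Primrec.fst.pair (Primrec.fst.comp (Primrec.unpair.comp Primrec.snd)))
      (Primrec.snd.comp (Primrec.unpair.comp Primrec.snd))) fun a => ?_
  constructor
  · rintro ⟨n, hn⟩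
    obtain ⟨k, hk⟩ := (hpR (a, n)).1 hn
    exact ⟨Nat.pair n k, by simpa using hk⟩
  · rintro ⟨k, hk⟩
    exact ⟨_, (hpR _).2 ⟨_, hk⟩⟩

theorem forall_mem_list {l : α → List β} (hl : Primrec l) {p : α → β → Prop}
    (hp : REPred fun x : α × β => p x.1 x.2) : REPred fun a => ∀ b ∈ l a, p a b := by
  obtain ⟨R, hR, hpR⟩ := hp.exists_primrecRel
  have hbounded : PrimrecRel fun (b : β) (y : α × ℕ) => ∃ k < y.2, R (y.1, b) k :=
    (hR.swap.exists_mem_list.comp (Primrec.list_range.comp (Primrec.snd.comp Primrec.snd))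
      ((Primrec.fst.comp Primrec.snd).pair Primrec.fst)).of_eq fun _ => by simp
  refine of_exists_primrecRel (R := fun a s => ∀ b ∈ l a, ∃ k < s, R (a, b) k)
    (hbounded.forall_mem_list.comp (hl.comp Primrec.fst) Primrec.id) fun a => ?_
  exact (forall₂_congr fun b _ => hpR (a, b)).trans
    (l a).finite_toSet.forall_mem_exists_iff_exists_bound

end REPred

theorem Denumerable.raise'_eq_foldl (l acc : List ℕ) (n : ℕ) :
    (l.foldl (fun s m => (s.1 ++ [m + s.2], m + s.2 + 1)) (acc, n)).1 =
      acc ++ Denumerable.raise' l n := by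
  induction l generalizing acc n with
  | nil => simp [Denumerable.raise']
  | cons m l ih => simp [Denumerable.raise', ih]

theorem Denumerable.primrec₂_raise' : Primrec₂ Denumerable.raise' := by
  have hstep : Primrec₂ fun (_ : List ℕ × ℕ) (x : (List ℕ × ℕ) × ℕ) =>
      (x.1.1 ++ [x.2 + x.1.2], x.2 + x.1.2 + 1) :=
    let hsum : Primrec fun x : (List ℕ × ℕ) × ℕ => x.2 + x.1.2 :=
      Primrec.nat_add.comp Primrec.snd (Primrec.snd.comp Primrec.fst)
    ((Primrec.list_concat.comp (Primrec.fst.comp Primrec.fst) hsum).pair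
      (Primrec.succ.comp hsum)).comp Primrec.snd
  refine (Primrec.fst.comp (Primrec.list_foldl Primrec.fst
    ((Primrec.const []).pair Primrec.snd) hstep)).of_eq fun x => ?_
  simp [Denumerable.raise'_eq_foldl]

def kfinList (d : ℕ) : List ℕ := Denumerable.raise' (Denumerable.ofNat (List ℕ) d) 0

theorem mem_kfinList_iff (x d : ℕ) : x ∈ kfinList d ↔ x ∈ Kfin d := by
  show _ ↔ x ∈ Finset.map _ (Denumerable.raise'Finset _ 0)
  simp [Denumerable.raise'Finset, Denumerable.eqv, kfinList]
  rfl

theorem primrec_kfinList : Primrec kfinList :=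
  Denumerable.primrec₂_raise'.comp (Primrec.ofNat (List ℕ)) (Primrec.const 0)

theorem REPred.forall_mem_Kfin {α : Type*} [Primcodable α] {p : α → ℕ → Prop}
    (hp : REPred fun x : α × ℕ => p x.1 x.2) {d : α → ℕ} (hd : Primrec d) :
    REPred fun a => ∀ z ∈ Kfin (d a), p a z :=
  (REPred.forall_mem_list (primrec_kfinList.comp hd) hp).of_eq fun a => by
    simp only [mem_kfinList_iff]

def enumOperator (Φ : Set (ℕ × ℕ)) (C : Set ℕ) : Set ℕ :=
  {x | ∃ d, (x, d) ∈ Φ ∧ (↑(Kfin d) : Set ℕ) ⊆ C}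

theorem enumOperator_mono {Φ : Set (ℕ × ℕ)} {C D : Set ℕ} (h : C ⊆ D) :
    enumOperator Φ C ⊆ enumOperator Φ D :=
  fun _ ⟨d, hd, hdC⟩ => ⟨d, hd, hdC.trans h⟩

theorem EnumReducible.exists_eq_enumOperator {A C : Set ℕ} (h : EnumReducible A C) :
    ∃ Φ : Set (ℕ × ℕ), REPred (· ∈ Φ) ∧ A = enumOperator Φ C :=
  let ⟨Φ, hΦ, hA⟩ := h
  ⟨Φ, hΦ, Set.ext hA⟩

theorem REPred.mem_enumOperator {β : Type*} [Primcodable β] {Φ : Set (ℕ × ℕ)}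
    (hΦ : REPred (· ∈ Φ)) {C : β → Set ℕ} (hC : REPred fun x : ℕ × β => x.1 ∈ C x.2) :
    REPred fun x : ℕ × β => x.1 ∈ enumOperator Φ (C x.2) := by
  have hΦ' : REPred fun y : (ℕ × β) × ℕ => (y.1.1, y.2) ∈ Φ :=
    hΦ.comp ((Computable.fst.comp Computable.fst).pair Computable.snd)
  have hC' : REPred fun w : ((ℕ × β) × ℕ) × ℕ => w.2 ∈ C w.1.1.2 :=
    hC.comp (f := fun w : ((ℕ × β) × ℕ) × ℕ => (w.2, w.1.1.2))
      (Computable.snd.pair (Computable.snd.comp (Computable.fst.comp Computable.fst)))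
  have hsub : REPred fun y : (ℕ × β) × ℕ => ∀ z ∈ Kfin y.2, z ∈ C y.1.2 :=
    forall_mem_Kfin (p := fun (y : (ℕ × β) × ℕ) z => z ∈ C y.1.2) hC' Primrec.snd
  exact exists_nat (p := fun (x : ℕ × β) d => (x.1, d) ∈ Φ ∧ ∀ z ∈ Kfin d, z ∈ C x.2)
    (hΦ'.and hsub)

theorem kpair_closed_downward (A0 A1 B : Set ℕ)
    (h : KPair A0 B) (hred : EnumReducible A1 A0) : KPair A1 B := by
  obtain ⟨W, hW, hW_mem, hW_not_mem⟩ := h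
  obtain ⟨Φ, hΦ, rfl⟩ := hred.exists_eq_enumOperator
  refine ⟨{x | x.1 ∈ enumOperator Φ {a | (a, x.2) ∈ W}},
    hΦ.mem_enumOperator (C := fun b => {a | (a, b) ∈ W}) hW, ?_, ?_⟩
  · intro a ha b hb
    exact enumOperator_mono (fun x hx => hW_mem x hx b hb) ha
  · intro a ha b hb hab
    exact ha (enumOperator_mono (fun x hx => by_contra fun hx0 => hW_not_mem x hx0 b hb hx) hab)
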